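/- arXiv:2401.17179 — 3 statements merged into one kernel-verified Lean document; each statement's English description precedes it below -/
import Mathlib

section
/- Let n ≥ 1, R > 0, and define z : (0,R] → ℝ by z(r) = (1/2)(r/R)³ - (3/2)(r/R). Then z satisfies the third-order ODE -r^{1-n}·(r^{n-1}·(r^{1-n}·(r^{n-1}·z)')')' = λ on (0,R) with λ = -n(n+2)/R³, together with the boundary conditions z(R) = -1 and z'(R) + (n-1)·z(R)/R = -(n-1)/R, and |z(r)| ≤ 1 for all r ∈ (0,R]. -/
/-!
Away from the origin every operator in the equation maps a two-term combination of real
powers `a s^k + b s^l` to another such combination, so the left-hand side can be computed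
exponent by exponent: the composite `radialDiv d ∘ deriv ∘ radialDiv d` multiplies `s^k` by
`(d - 1 + k)(k - 1)(d - 3 + k) s^{-3}`. This factor vanishes at `k = 1` and equals `2d(d + 2)`
at `k = 3`, which gives `λ`. The bound `|z| ≤ 1` holds because `t³/2 - 3t/2` decreases from
`1` to `-1` on `[-1, 1]`.
-/

open Set

/-- The divergence of the radial field `f(|x|) x/|x|` on `ℝ^d`. -/
noncomputable def radialDiv (d : ℝ) (f : ℝ → ℝ) (r : ℝ) : ℝ :=
  r ^ (1 - d) * deriv (fun s => s ^ (d - 1) * f s) r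

lemma radialDiv_congr {d : ℝ} {f g : ℝ → ℝ} (h : EqOn f g (Ioi 0)) :
    EqOn (radialDiv d f) (radialDiv d g) (Ioi 0) := by
  intro r hr
  have hmul : EqOn (fun s => s ^ (d - 1) * f s) (fun s => s ^ (d - 1) * g s) (Ioi 0) :=
    fun s hs => by simp only [h hs]
  simp only [radialDiv, hmul.deriv isOpen_Ioi hr]

lemma hasDerivAt_rpow_add {r : ℝ} (hr : 0 < r) (a k b l : ℝ) :
    HasDerivAt (fun s => a * s ^ k + b * s ^ l)
      (a * k * r ^ (k - 1) + b * l * r ^ (l - 1)) r := by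
  have hk := (Real.hasDerivAt_rpow_const (p := k) (Or.inl hr.ne')).const_mul a
  have hl := (Real.hasDerivAt_rpow_const (p := l) (Or.inl hr.ne')).const_mul b
  exact (hk.add hl).congr_deriv (by ring)

lemma eqOn_deriv_rpow_add (a k b l : ℝ) :
    EqOn (deriv fun s => a * s ^ k + b * s ^ l)
      (fun s => a * k * s ^ (k - 1) + b * l * s ^ (l - 1)) (Ioi 0) :=
  fun _ hr => (hasDerivAt_rpow_add hr a k b l).deriv

lemma eqOn_radialDiv_rpow_add (d a k b l : ℝ) :
    EqOn (radialDiv d fun s => a * s ^ k + b * s ^ l)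
      (fun s => a * (d - 1 + k) * s ^ (k - 1) + b * (d - 1 + l) * s ^ (l - 1)) (Ioi 0) := by
  intro r hr
  have hprod : EqOn (fun s => s ^ (d - 1) * (a * s ^ k + b * s ^ l))
      (fun s => a * s ^ (d - 1 + k) + b * s ^ (d - 1 + l)) (Ioi 0) := fun s hs => by
    simp only [Real.rpow_add (mem_Ioi.mp hs)]
    ring
  have hpow (p : ℝ) : r ^ (1 - d) * r ^ (d - 1 + p - 1) = r ^ (p - 1) := by
    rw [← Real.rpow_add hr]
    ring_nf
  simp only [radialDiv, hprod.deriv isOpen_Ioi hr, eqOn_deriv_rpow_add _ _ _ _ hr]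
  linear_combination a * (d - 1 + k) * hpow k + b * (d - 1 + l) * hpow l

lemma eqOn_radialDiv_deriv_radialDiv_rpow_add (d a k b l : ℝ) :
    EqOn (radialDiv d (deriv (radialDiv d fun s => a * s ^ k + b * s ^ l)))
      (fun s => a * ((d - 1 + k) * (k - 1) * (d - 3 + k)) * s ^ (k - 3)
        + b * ((d - 1 + l) * (l - 1) * (d - 3 + l)) * s ^ (l - 3)) (Ioi 0) := by
  have hdiv := eqOn_radialDiv_rpow_add d a k b l
  have hgrad := (hdiv.deriv isOpen_Ioi).trans (eqOn_deriv_rpow_add _ _ _ _)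
  refine ((radialDiv_congr hgrad).trans (eqOn_radialDiv_rpow_add _ _ _ _ _)).trans ?_
  intro s _
  ring_nf

lemma abs_half_cube_sub_three_halves_le_one {t : ℝ} (ht : t ∈ Icc (-1) 1) :
    |1 / 2 * t ^ 3 - 3 / 2 * t| ≤ 1 := by
  obtain ⟨ht₀, ht₁⟩ := ht
  rw [abs_le]
  constructor
  · nlinarith [mul_nonneg (sq_nonneg (t - 1)) (by linarith : (0 : ℝ) ≤ t + 2)]
  · nlinarith [mul_nonneg (sq_nonneg (t + 1)) (by linarith : (0 : ℝ) ≤ 2 - t)]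

theorem fourth_order_ball_calibration_general
    (n : ℕ) (R : ℝ) (hR : 0 < R)
    (z : ℝ → ℝ) (hz : ∀ r, z r = (1/2) * (r/R)^3 - (3/2) * (r/R)) :
    (∀ r ∈ Set.Ioo (0:ℝ) R,
      -(r ^ ((1:ℝ) - n)) *
        deriv (fun s => s ^ ((n:ℝ) - 1) *
          deriv (fun s' => s' ^ ((1:ℝ) - n) *
            deriv (fun s'' => s'' ^ ((n:ℝ) - 1) * z s'') s') s) r
        = -((n:ℝ) * ((n:ℝ) + 2)) / R^3) ∧
    z R = -1 ∧
    deriv z R + ((n:ℝ) - 1) * z R / R = -((n:ℝ) - 1) / R ∧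
    (∀ r ∈ Set.Ioc (0:ℝ) R, |z r| ≤ 1) := by
  have hz_rpow : z = fun s => 1 / (2 * R ^ 3) * s ^ (3 : ℝ) + -3 / (2 * R) * s ^ (1 : ℝ) := by
    ext s
    rw [hz, Real.rpow_one, Real.rpow_ofNat]
    field_simp
    ring
  have hzR : z R = -1 := by
    rw [hz, div_self hR.ne']
    norm_num
  refine ⟨fun r hr => ?_, hzR, ?_, fun r hr => ?_⟩
  · -- the nested expression is `radialDiv n (deriv (radialDiv n z)) r` unfolded
    change -(r ^ ((1:ℝ) - n)) * deriv (fun s => s ^ ((n:ℝ) - 1) *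
      deriv (radialDiv n z) s) r = _
    rw [neg_mul, ← radialDiv, hz_rpow, eqOn_radialDiv_deriv_radialDiv_rpow_add _ _ _ _ _ hr.1]
    norm_num
    field_simp
    ring
  · rw [hz_rpow, eqOn_deriv_rpow_add _ _ _ _ hR, ← hz_rpow, hzR]
    norm_num
    field_simp
    ring
  · rw [hz]
    exact abs_half_cube_sub_three_halves_le_one
      ⟨by linarith [div_pos hr.1 hR], (div_le_one hR).mpr hr.2⟩

/-- Radial calibration of the ball `B_R` for the fourth-order total variation flow:
`z r = (1/2)(r/R)³ - (3/2)(r/R)` satisfies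
`-r^{1-n}(r^{n-1}(r^{1-n}(r^{n-1}z)')')' = λ` on `(0,R)` with `λ = -n(n+2)/R³`,
the boundary conditions `z R = -1`, `z'(R) + (n-1)z(R)/R = -(n-1)/R`, and `|z| ≤ 1`
on `(0,R]`. -/
theorem fourth_order_ball_calibration
    (n : ℕ) (hn : 1 ≤ n) (R : ℝ) (hR : 0 < R)
    (z : ℝ → ℝ) (hz : ∀ r, z r = (1/2) * (r/R)^3 - (3/2) * (r/R)) :
    (∀ r ∈ Set.Ioo (0:ℝ) R,
      -(r ^ ((1:ℝ) - n)) *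
        deriv (fun s => s ^ ((n:ℝ) - 1) *
          deriv (fun s' => s' ^ ((1:ℝ) - n) *
            deriv (fun s'' => s'' ^ ((n:ℝ) - 1) * z s'') s') s) r
        = -((n:ℝ) * ((n:ℝ) + 2)) / R^3) ∧
    z R = -1 ∧
    deriv z R + ((n:ℝ) - 1) * z R / R = -((n:ℝ) - 1) / R ∧
    (∀ r ∈ Set.Ioc (0:ℝ) R, |z r| ≤ 1) :=
  fourth_order_ball_calibration_general n R hR z hz
end

section
/- Let n ≥ 3 and R > 0, and define z : [R,∞) → ℝ by z(r) = -((n-1)/2)·(r/R)^{3-n} + ((n-3)/2)·(r/R)^{1-n}. Then z(R) = -1, z'(R) + (n-1)z(R)/R = -(n-1)/R, |z(r)| ≤ 1 for all r ≥ R, and z satisfies r^{1-n}·(r^{n-1}·(r^{1-n}·(r^{n-1}·z)')')' = 0 on (R,∞). -/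
/-- Radial calibration of the complement of a ball for the fourth-order total
variation flow in dimension `n ≥ 3`:
`z r = -((n-1)/2)(r/R)^{3-n} + ((n-3)/2)(r/R)^{1-n}` satisfies `z R = -1`,
`z'(R) + (n-1)z(R)/R = -(n-1)/R`, `|z| ≤ 1` on `[R,∞)`, and
`r^{1-n}(r^{n-1}(r^{1-n}(r^{n-1}z)')')' = 0` on `(R,∞)`. -/
theorem fourth_order_ball_complement_calibration
    (n : ℕ) (hn : 3 ≤ n) (R : ℝ) (hR : 0 < R)
    (z : ℝ → ℝ)
    (hz : ∀ r, z r = -(((n:ℝ) - 1)/2) * (r/R) ^ ((3:ℝ) - n)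
        + (((n:ℝ) - 3)/2) * (r/R) ^ ((1:ℝ) - n)) :
    z R = -1 ∧
    deriv z R + ((n:ℝ) - 1) * z R / R = -((n:ℝ) - 1) / R ∧
    (∀ r, R ≤ r → |z r| ≤ 1) ∧
    (∀ r, R < r →
      r ^ ((1:ℝ) - n) *
        deriv (fun s => s ^ ((n:ℝ) - 1) *
          deriv (fun s' => s' ^ ((1:ℝ) - n) *
            deriv (fun s'' => s'' ^ ((n:ℝ) - 1) * z s'') s') s) r = 0) := by
  have hRne : R ≠ 0 := ne_of_gt hR
  have hRR : R / R = 1 := div_self hRne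
  have hn3 : (3:ℝ) ≤ (n:ℝ) := by exact_mod_cast hn
  -- Part 1
  have h1 : z R = -1 := by
    rw [hz R, hRR, Real.one_rpow, Real.one_rpow]; ring
  refine ⟨h1, ?_, ?_, ?_⟩
  · -- Part 2: derivative at R
    have hdivR : HasDerivAt (fun r : ℝ => r / R) (1 / R) R := by
      simpa using (hasDerivAt_id R).div_const R
    have hpow : ∀ p : ℝ, HasDerivAt (fun r : ℝ => (r / R) ^ p) (p / R) R := by
      intro p
      have h := hdivR.rpow_const (p := p) (Or.inl (by simp [hRR]))
      have h2 : 1 / R * p * (R / R) ^ (p - 1) = p / R := by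
        rw [hRR, Real.one_rpow]; ring
      rw [h2] at h
      exact h
    have hz' : HasDerivAt z
        (-(((n:ℝ) - 1)/2) * (((3:ℝ) - n) / R) + (((n:ℝ) - 3)/2) * (((1:ℝ) - n) / R)) R := by
      have hzf : z = fun r => -(((n:ℝ) - 1)/2) * (r/R) ^ ((3:ℝ) - n)
          + (((n:ℝ) - 3)/2) * (r/R) ^ ((1:ℝ) - n) := funext hz
      rw [hzf]
      exact ((hpow _).const_mul _).add ((hpow _).const_mul _)
    rw [hz'.deriv, h1]
    field_simp
    ring
  · -- Part 3: |z| ≤ 1 on [R, ∞)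
    intro r hr
    have ht1 : 1 ≤ r / R := (one_le_div hR).mpr hr
    have ht0 : 0 < r / R := lt_of_lt_of_le one_pos ht1
    have hP : (r/R) ^ ((n:ℝ) - 1) = (r/R) ^ (n - 1 : ℕ) := by
      rw [← Real.rpow_natCast (r/R) (n-1)]
      congr 1
      push_cast [Nat.cast_sub (by omega : 1 ≤ n)]
      ring
    have e3 : (r/R) ^ ((3:ℝ) - n) * (r/R) ^ ((n:ℝ) - 1) = (r/R)^2 := by
      rw [← Real.rpow_add ht0, show ((3:ℝ) - n) + ((n:ℝ) - 1) = 2 by ring]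
      exact Real.rpow_two _
    have e4 : (r/R) ^ ((1:ℝ) - n) * (r/R) ^ ((n:ℝ) - 1) = 1 := by
      rw [← Real.rpow_add ht0, show ((1:ℝ) - n) + ((n:ℝ) - 1) = 0 by ring, Real.rpow_zero]
    have hPpos : (0:ℝ) < (r/R) ^ (n - 1 : ℕ) := pow_pos ht0 _
    have hzP : z r * (r/R) ^ (n - 1 : ℕ) =
        -(((n:ℝ) - 1)/2) * (r/R)^2 + ((n:ℝ) - 3)/2 := by
      rw [hz r, ← hP]
      linear_combination (-(((n:ℝ) - 1)/2)) * e3 + (((n:ℝ) - 3)/2) * e4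
    -- main inequality : (n-1)t^2 - (n-3) ≤ 2 t^(n-1)
    have hm : ((n - 3 : ℕ) : ℝ) = (n:ℝ) - 3 := by
      push_cast [Nat.cast_sub hn]; ring
    have hbern : 1 + ((n - 3 : ℕ) : ℝ) * (r/R - 1) ≤ (r/R) ^ (n - 3 : ℕ) := by
      have := one_add_mul_le_pow (a := r/R - 1) (by linarith) (n - 3)
      simpa using this
    have hsplit : (r/R) ^ (n - 1 : ℕ) = (r/R) ^ (n - 3 : ℕ) * (r/R)^2 := by
      rw [← pow_add]
      congr 1
      omega
    have hsq : 1 ≤ (r/R)^2 := one_le_pow₀ ht1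
    have hmain : (((n:ℝ) - 1) * (r/R)^2 - ((n:ℝ) - 3)) / 2 ≤ (r/R) ^ (n - 1 : ℕ) := by
      rw [hsplit]
      nlinarith [hbern, hm, sq_nonneg (r/R - 1), sq_nonneg (r/R), ht1,
        mul_nonneg (mul_nonneg (Nat.cast_nonneg (n-3) : (0:ℝ) ≤ (n-3:ℕ)) (sq_nonneg (r/R - 1))) (by linarith : (0:ℝ) ≤ 2*(r/R) + 1)]
    have habs : |z r * (r/R) ^ (n - 1 : ℕ)| ≤ (r/R) ^ (n - 1 : ℕ) := by
      rw [hzP, abs_le]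
      constructor
      · nlinarith [hmain]
      · nlinarith [hsq, hn3, hPpos, one_le_pow₀ ht1 (n := n-1)]
    have hfin : |z r| * (r/R) ^ (n-1:ℕ) ≤ 1 * (r/R) ^ (n-1:ℕ) := by
      rw [one_mul]
      calc |z r| * (r/R) ^ (n-1:ℕ) = |z r| * |(r/R) ^ (n-1:ℕ)| := by
            rw [abs_of_pos hPpos]
        _ = |z r * (r/R) ^ (n-1:ℕ)| := (abs_mul _ _).symm
        _ ≤ (r/R) ^ (n-1:ℕ) := habs
    exact le_of_mul_le_mul_right (by simpa using hfin) hPpos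
  · -- Part 4: fourth-order equation
    intro r hr
    have hr0 : 0 < r := hR.trans hr
    set C₁ : ℝ := -(((n:ℝ) - 1)/2) * R ^ ((n:ℝ) - 3) with hC1
    set C₂ : ℝ := (((n:ℝ) - 3)/2) * R ^ ((n:ℝ) - 1) with hC2
    have key1 : Set.EqOn (fun s'' : ℝ => s'' ^ ((n:ℝ) - 1) * z s'')
        (fun s => C₁ * s ^ 2 + C₂) (Set.Ioi (0:ℝ)) := by
      intro s hs
      have hs0 : (0:ℝ) < s := hs
      simp only
      rw [hz s]
      have e1 : s ^ ((n:ℝ)-1) * (s/R) ^ ((3:ℝ)-n) = s^2 * R ^ ((n:ℝ)-3) := by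
        rw [Real.div_rpow hs0.le hR.le, show R ^ ((n:ℝ)-3) = (R ^ ((3:ℝ)-n))⁻¹ by
          rw [show (n:ℝ)-3 = -((3:ℝ)-n) by ring, Real.rpow_neg hR.le]]
        rw [div_eq_mul_inv, ← mul_assoc, ← Real.rpow_add hs0,
          show ((n:ℝ)-1) + ((3:ℝ)-n) = 2 by ring, Real.rpow_two]
      have e2 : s ^ ((n:ℝ)-1) * (s/R) ^ ((1:ℝ)-n) = R ^ ((n:ℝ)-1) := by
        rw [Real.div_rpow hs0.le hR.le, show R ^ ((n:ℝ)-1) = (R ^ ((1:ℝ)-n))⁻¹ by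
          rw [show (n:ℝ)-1 = -((1:ℝ)-n) by ring, Real.rpow_neg hR.le]]
        rw [div_eq_mul_inv, ← mul_assoc, ← Real.rpow_add hs0,
          show ((n:ℝ)-1) + ((1:ℝ)-n) = 0 by ring, Real.rpow_zero, one_mul]
      rw [hC1, hC2]
      linear_combination (-(((n:ℝ) - 1)/2)) * e1 + (((n:ℝ) - 3)/2) * e2
    have hd1 : ∀ s ∈ Set.Ioi (0:ℝ),
        deriv (fun s'' : ℝ => s'' ^ ((n:ℝ) - 1) * z s'') s = 2 * C₁ * s := by
      intro s hs
      have hev : (fun s'' : ℝ => s'' ^ ((n:ℝ) - 1) * z s'') =ᶠ[nhds s]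
          (fun s => C₁ * s ^ 2 + C₂) :=
        Filter.eventuallyEq_of_mem (isOpen_Ioi.mem_nhds hs) key1
      rw [hev.deriv_eq]
      have hder : HasDerivAt (fun s : ℝ => C₁ * s ^ 2 + C₂) (C₁ * ((2:ℕ) * s ^ 1)) s :=
        ((hasDerivAt_pow 2 s).const_mul C₁).add_const C₂
      rw [hder.deriv]
      push_cast
      ring
    have key2 : Set.EqOn (fun s' : ℝ => s' ^ ((1:ℝ) - n) *
          deriv (fun s'' => s'' ^ ((n:ℝ) - 1) * z s'') s')
        (fun s => (2 * C₁) * s ^ ((2:ℝ) - n)) (Set.Ioi (0:ℝ)) := by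
      intro s hs
      have hs0 : (0:ℝ) < s := hs
      simp only
      rw [hd1 s hs, show (2:ℝ) - n = ((1:ℝ) - n) + 1 by ring, Real.rpow_add hs0,
        Real.rpow_one]
      ring
    have hd2 : ∀ s ∈ Set.Ioi (0:ℝ),
        deriv (fun s' : ℝ => s' ^ ((1:ℝ) - n) *
          deriv (fun s'' => s'' ^ ((n:ℝ) - 1) * z s'') s') s
        = (2 * C₁) * (((2:ℝ) - n) * s ^ (((2:ℝ) - n) - 1)) := by
      intro s hs
      have hs0 : (0:ℝ) < s := hs
      have hev : (fun s' : ℝ => s' ^ ((1:ℝ) - n) *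
          deriv (fun s'' => s'' ^ ((n:ℝ) - 1) * z s'') s') =ᶠ[nhds s]
          (fun s => (2 * C₁) * s ^ ((2:ℝ) - n)) :=
        Filter.eventuallyEq_of_mem (isOpen_Ioi.mem_nhds hs) key2
      rw [hev.deriv_eq]
      exact (((Real.hasDerivAt_rpow_const (x := s) (p := (2:ℝ) - n)
        (Or.inl (ne_of_gt hs0)))).const_mul (2 * C₁)).deriv
    have key3 : Set.EqOn (fun s : ℝ => s ^ ((n:ℝ) - 1) *
          deriv (fun s' => s' ^ ((1:ℝ) - n) *
            deriv (fun s'' => s'' ^ ((n:ℝ) - 1) * z s'') s') s)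
        (fun _ => (2 * C₁) * ((2:ℝ) - n)) (Set.Ioi (0:ℝ)) := by
      intro s hs
      have hs0 : (0:ℝ) < s := hs
      simp only
      rw [hd2 s hs]
      have e5 : s ^ ((n:ℝ)-1) * s ^ (((2:ℝ)-n)-1) = 1 := by
        rw [← Real.rpow_add hs0, show ((n:ℝ)-1) + (((2:ℝ)-n)-1) = 0 by ring,
          Real.rpow_zero]
      linear_combination (2 * C₁ * ((2:ℝ) - n)) * e5
    have hev3 : (fun s : ℝ => s ^ ((n:ℝ) - 1) *
          deriv (fun s' => s' ^ ((1:ℝ) - n) *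
            deriv (fun s'' => s'' ^ ((n:ℝ) - 1) * z s'') s') s) =ᶠ[nhds r]
        (fun _ => (2 * C₁) * ((2:ℝ) - n)) :=
      Filter.eventuallyEq_of_mem (isOpen_Ioi.mem_nhds (Set.mem_Ioi.mpr hr0)) key3
    rw [hev3.deriv_eq, deriv_const, mul_zero]
end

section
/- Let w ∈ BV((0,1)) be left-continuous, and for N ∈ ℕ define the step function w^N by w^N(x) = N·∫_{(k-1)/N}^{k/N} w(y) dy for x ∈ [(k-1)/N, k/N). Then ‖w - w^N‖²_{L²((0,1))} ≤ (1/N)·TV(w)², where TV(w) = |Dw|((0,1)) is the total variation of w. -/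
open MeasureTheory Filter

/-!
On the `k`-th cell `J_k` of the uniform partition of `(0,1)` the step function `w^N` is the mean
of `w` over `J_k`, so it lies between two values of `w` on `J_k` and `|w - w^N| ≤ V_k`, the
variation of `w` on `J_k`. Hence `‖w - w^N‖²_{L²(J_k)} ≤ V_k² / N`, and summing over the cells,
`∑ V_k² ≤ (∑ V_k)² ≤ TV(w)²` because variations over consecutive cells add up to at most the
total variation.
-/

theorem eVariationOn.sum_inter_Ico_le {α E : Type*} [LinearOrder α] [PseudoEMetricSpace E]
    (f : α → E) (s : Set α) {u : ℕ → α} (hu : Monotone u) (n : ℕ) :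
    ∑ i ∈ Finset.range n, eVariationOn f (s ∩ Set.Ico (u i) (u (i + 1))) ≤
      eVariationOn f s := by
  suffices h : ∀ n, ∑ i ∈ Finset.range n, eVariationOn f (s ∩ Set.Ico (u i) (u (i + 1))) ≤
      eVariationOn f (s ∩ Set.Ico (u 0) (u n)) from
    (h n).trans (eVariationOn.mono f Set.inter_subset_left)
  intro n
  induction n with
  | zero => simp
  | succ n ih =>
    calc ∑ i ∈ Finset.range (n + 1), eVariationOn f (s ∩ Set.Ico (u i) (u (i + 1)))
        ≤ eVariationOn f (s ∩ Set.Ico (u 0) (u n)) +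
            eVariationOn f (s ∩ Set.Ico (u n) (u (n + 1))) := by
          rw [Finset.sum_range_succ]
          gcongr
      _ ≤ eVariationOn f (s ∩ Set.Ico (u 0) (u n) ∪ s ∩ Set.Ico (u n) (u (n + 1))) :=
          eVariationOn.add_le_union f fun x hx y hy => hx.2.2.le.trans hy.2.1
      _ = eVariationOn f (s ∩ Set.Ico (u 0) (u (n + 1))) := by
          rw [← Set.inter_union_distrib_left,
            Set.Ico_union_Ico_eq_Ico (hu n.zero_le) (hu n.le_succ)]

section BoundedVariation

variable {α : Type*} [LinearOrder α] [MeasurableSpace α] {μ : Measure α} {f : α → ℝ}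
  {s : Set α}

theorem BoundedVariationOn.integrableOn [TopologicalSpace α] [OrderClosedTopology α]
    [BorelSpace α] (hf : BoundedVariationOn f s) (hs : MeasurableSet s) (hμs : μ s ≠ ⊤) :
    IntegrableOn f s μ := by
  rcases s.eq_empty_or_nonempty with rfl | ⟨x₀, hx₀⟩
  · simp
  obtain ⟨p, q, hp, hq, hpq⟩ := hf.locallyBoundedVariationOn.exists_monotoneOn_sub_monotoneOn
  have hmeas : AEMeasurable f (μ.restrict s) := hpq ▸
    (aemeasurable_restrict_of_monotoneOn hs hp).sub (aemeasurable_restrict_of_monotoneOn hs hq)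
  refine Integrable.mono' (integrableOn_const (C := |f x₀| + (eVariationOn f s).toReal) hμs)
    hmeas.aestronglyMeasurable (ae_restrict_of_forall_mem hs fun x hx => ?_)
  rw [Real.norm_eq_abs]
  linarith [abs_sub_abs_le_abs_sub (f x) (f x₀), Real.dist_eq (f x) (f x₀) ▸ hf.dist_le hx hx₀]

theorem BoundedVariationOn.abs_sub_setAverage_le {x : α} (hf : BoundedVariationOn f s)
    (hfi : IntegrableOn f s μ) (hμ : μ s ≠ 0) (hμ₁ : μ s ≠ ⊤) (hx : x ∈ s) :
    |f x - ⨍ y in s, f y ∂μ| ≤ (eVariationOn f s).toReal := by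
  obtain ⟨y, hy, hy_le⟩ := exists_le_setAverage hμ hμ₁ hfi
  obtain ⟨z, hz, hz_ge⟩ := exists_setAverage_le hμ hμ₁ hfi
  exact abs_le.2 ⟨by linarith [hf.sub_le hz hx], by linarith [hf.sub_le hx hy]⟩

end BoundedVariation

theorem setIntegral_sq_le_sum_of_abs_le {α ι : Type*} [MeasurableSpace α] {μ : Measure α}
    {g : α → ℝ} {s : Set α} {t : Finset ι} {J : ι → Set α} {C : ι → ℝ}
    (hJs : ⋃ i ∈ t, J i = s) (hJ : ∀ i ∈ t, MeasurableSet (J i))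
    (hdisj : Set.Pairwise t (Function.onFun Disjoint J)) (hμJ : ∀ i ∈ t, μ (J i) ≠ ⊤)
    (hg : AEStronglyMeasurable g (μ.restrict s)) (hC : ∀ i ∈ t, ∀ x ∈ J i, |g x| ≤ C i) :
    ∫ x in s, g x ^ 2 ∂μ ≤ ∑ i ∈ t, μ.real (J i) * C i ^ 2 := by
  have hsq (i : ι) (hi : i ∈ t) (x : α) (hx : x ∈ J i) : ‖g x ^ 2‖ ≤ C i ^ 2 := by
    rw [norm_pow, Real.norm_eq_abs]
    exact pow_le_pow_left₀ (abs_nonneg _) (hC i hi x hx) 2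
  have hint (i : ι) (hi : i ∈ t) : IntegrableOn (fun x => g x ^ 2) (J i) μ :=
    Integrable.mono' (integrableOn_const (hμJ i hi))
      ((hg.mono_measure (Measure.restrict_mono (hJs ▸ Set.subset_biUnion_of_mem hi) le_rfl)).pow 2)
      (ae_restrict_of_forall_mem (hJ i hi) (hsq i hi))
  rw [← hJs, integral_biUnion_finset t hJ hdisj hint]
  refine Finset.sum_le_sum fun i hi => (le_abs_self _).trans ?_
  rw [← Real.norm_eq_abs, mul_comm]
  exact norm_setIntegral_le_of_norm_le_const (hμJ i hi).lt_top (hsq i hi)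

/-- Cut down to `(0,1)` because `w` is only controlled there; this removes just the null set `{0}`
from the first cell `[0, 1/N)`. -/
def uniformCell (N k : ℕ) : Set ℝ :=
  Set.Ioo 0 1 ∩ Set.Ico ((k : ℝ) / N) (((k + 1 : ℕ) : ℝ) / N)

noncomputable def uniformStep (f : ℝ → ℝ) (N : ℕ) (x : ℝ) : ℝ :=
  (N : ℝ) * ∫ y in Set.Ico ((⌊(N : ℝ) * x⌋ : ℝ) / N) (((⌊(N : ℝ) * x⌋ : ℝ) + 1) / N), f y

section UniformCell

variable {N k : ℕ} {x : ℝ}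

theorem measurableSet_uniformCell : MeasurableSet (uniformCell N k) :=
  measurableSet_Ioo.inter measurableSet_Ico

theorem mem_uniformCell_iff (hN : 0 < N) :
    x ∈ uniformCell N k ↔ x ∈ Set.Ioo 0 1 ∧ ⌊(N : ℝ) * x⌋₊ = k := by
  have hN' : (0 : ℝ) < N := by exact_mod_cast hN
  simp only [uniformCell, Set.mem_inter_iff, Set.mem_Ico, and_congr_right_iff]
  intro hx
  rw [Nat.floor_eq_iff (by positivity [hx.1]), div_le_iff₀ hN', lt_div_iff₀ hN', mul_comm x]
  push_cast
  rfl

theorem lt_of_mem_uniformCell (hN : 0 < N) (hx : x ∈ uniformCell N k) : k < N := by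
  obtain ⟨⟨hx0, hx1⟩, rfl⟩ := (mem_uniformCell_iff hN).1 hx
  rw [Nat.floor_lt (by positivity)]
  exact mul_lt_of_lt_one_right (by exact_mod_cast hN) hx1

theorem pairwise_disjoint_uniformCell (hN : 0 < N) :
    Pairwise (Function.onFun Disjoint (uniformCell N)) :=
  fun _ _ hij => Set.disjoint_left.2 fun _ hi hj =>
    hij (((mem_uniformCell_iff hN).1 hi).2.symm.trans ((mem_uniformCell_iff hN).1 hj).2)

theorem biUnion_range_uniformCell (hN : 0 < N) :
    ⋃ k ∈ Finset.range N, uniformCell N k = Set.Ioo 0 1 := by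
  refine subset_antisymm (Set.iUnion₂_subset fun _ _ => Set.inter_subset_left) fun x hx => ?_
  have hx' : x ∈ uniformCell N ⌊(N : ℝ) * x⌋₊ := (mem_uniformCell_iff hN).2 ⟨hx, rfl⟩
  exact Set.mem_biUnion (Finset.mem_range.2 (lt_of_mem_uniformCell hN hx')) hx'

theorem uniformCell_ae_eq_Ico (hk : k < N) :
    uniformCell N k =ᵐ[volume] Set.Ico ((k : ℝ) / N) (((k + 1 : ℕ) : ℝ) / N) := by
  have hsub : Set.Ico ((k : ℝ) / N) (((k + 1 : ℕ) : ℝ) / N) ⊆ Set.Ico 0 1 :=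
    Set.Ico_subset_Ico (by positivity) (div_le_one_of_le₀ (by exact_mod_cast hk) (by positivity))
  rw [← Set.inter_eq_right.2 hsub]
  exact Ioo_ae_eq_Ico.inter EventuallyEq.rfl

theorem volume_uniformCell (hk : k < N) :
    volume (uniformCell N k) = ENNReal.ofReal (1 / N) := by
  rw [measure_congr (uniformCell_ae_eq_Ico hk), Real.volume_Ico]
  congr 1
  push_cast
  ring

theorem measureReal_uniformCell (hk : k < N) : volume.real (uniformCell N k) = 1 / N := by
  rw [measureReal_def, volume_uniformCell hk, ENNReal.toReal_ofReal (by positivity)]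

theorem BoundedVariationOn.sum_eVariationOn_uniformCell_le {f : ℝ → ℝ}
    (hf : BoundedVariationOn f (Set.Ioo 0 1)) :
    ∑ k ∈ Finset.range N, (eVariationOn f (uniformCell N k)).toReal ≤
      (eVariationOn f (Set.Ioo 0 1)).toReal := by
  rw [← ENNReal.toReal_sum fun k _ => (hf.mono Set.inter_subset_left :
    BoundedVariationOn f (uniformCell N k))]
  exact ENNReal.toReal_mono hf (eVariationOn.sum_inter_Ico_le f _
    (Nat.mono_cast.div_const (Nat.cast_nonneg N)) N)

theorem measurable_uniformStep (f : ℝ → ℝ) (N : ℕ) : Measurable (uniformStep f N) :=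
  ((measurable_from_top (f := fun n : ℤ =>
    ∫ y in Set.Ico ((n : ℝ) / N) (((n : ℝ) + 1) / N), f y)).comp
      (Int.measurable_floor.comp (measurable_const_mul _))).const_mul _

theorem uniformStep_eq_setAverage (f : ℝ → ℝ) (hN : 0 < N) (hx : x ∈ uniformCell N k) :
    uniformStep f N x = ⨍ y in uniformCell N k, f y := by
  have hk := lt_of_mem_uniformCell hN hx
  obtain ⟨hx01, hfloor⟩ := (mem_uniformCell_iff hN).1 hx
  have hint : ⌊(N : ℝ) * x⌋ = k := by
    rw [← Int.natCast_floor_eq_floor (by positivity [hx01.1]), hfloor]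
  rw [uniformStep, hint, setAverage_eq, setIntegral_congr_set (uniformCell_ae_eq_Ico hk),
    measureReal_uniformCell hk]
  push_cast
  simp [smul_eq_mul]

theorem BoundedVariationOn.abs_sub_uniformStep_le {f : ℝ → ℝ}
    (hf : BoundedVariationOn f (Set.Ioo 0 1)) (hN : 0 < N) (hx : x ∈ uniformCell N k) :
    |f x - uniformStep f N x| ≤ (eVariationOn f (uniformCell N k)).toReal := by
  have hk := lt_of_mem_uniformCell hN hx
  have hf_cell : BoundedVariationOn f (uniformCell N k) := hf.mono Set.inter_subset_left
  rw [uniformStep_eq_setAverage f hN hx]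
  refine hf_cell.abs_sub_setAverage_le (hf_cell.integrableOn measurableSet_uniformCell ?_) ?_ ?_ hx
    <;> simp [volume_uniformCell hk, hN.ne']

end UniformCell

theorem bv_piecewise_average_L2_error_general
    (w : ℝ → ℝ)
    (hBV : BoundedVariationOn w (Set.Ioo 0 1))
    (N : ℕ) (hN : 0 < N)
    (wN : ℝ → ℝ)
    (hwN : ∀ x : ℝ, wN x =
      (N : ℝ) * ∫ y in Set.Ico ((⌊(N : ℝ) * x⌋ : ℝ) / N)
        (((⌊(N : ℝ) * x⌋ : ℝ) + 1) / N), w y) :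
    (∫ x in Set.Ioo (0:ℝ) 1, (w x - wN x) ^ 2) ≤
      (1 / N) * ((eVariationOn w (Set.Ioo 0 1)).toReal) ^ 2 := by
  obtain rfl : wN = uniformStep w N := funext hwN
  set V : ℕ → ℝ := fun k => (eVariationOn w (uniformCell N k)).toReal
  have hmeas : AEStronglyMeasurable (fun x => w x - uniformStep w N x)
      (volume.restrict (Set.Ioo 0 1)) :=
    (hBV.integrableOn measurableSet_Ioo (by simp)).aestronglyMeasurable.sub
      (measurable_uniformStep w N).aestronglyMeasurable
  calc ∫ x in Set.Ioo (0:ℝ) 1, (w x - uniformStep w N x) ^ 2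
      ≤ ∑ k ∈ Finset.range N, volume.real (uniformCell N k) * V k ^ 2 :=
        setIntegral_sq_le_sum_of_abs_le (biUnion_range_uniformCell hN)
          (fun _ _ => measurableSet_uniformCell)
          ((pairwise_disjoint_uniformCell hN).set_pairwise _)
          (fun k hk => by simp [volume_uniformCell (Finset.mem_range.1 hk)]) hmeas
          fun _ _ _ hx => hBV.abs_sub_uniformStep_le hN hx
    _ = 1 / N * ∑ k ∈ Finset.range N, V k ^ 2 := by
        rw [Finset.mul_sum]
        exact Finset.sum_congr rfl fun k hk => by
          rw [measureReal_uniformCell (Finset.mem_range.1 hk)]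
    _ ≤ 1 / N * (∑ k ∈ Finset.range N, V k) ^ 2 := by
        gcongr
        exact Finset.sum_sq_le_sq_sum_of_nonneg fun k _ => ENNReal.toReal_nonneg
    _ ≤ 1 / N * (eVariationOn w (Set.Ioo 0 1)).toReal ^ 2 := by
        gcongr
        exact hBV.sum_eVariationOn_uniformCell_le

/-- `L²` error of the piecewise-average approximation of a left-continuous `BV`
function on `(0,1)`: with `w^N` the step function of averages on the uniform
partition into `N` pieces, `‖w - w^N‖²_{L²((0,1))} ≤ (1/N)·TV(w)²`. -/
theorem bv_piecewise_average_L2_error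
    (w : ℝ → ℝ)
    (hBV : BoundedVariationOn w (Set.Ioo 0 1))
    (hlc : ∀ x ∈ Set.Ioo (0:ℝ) 1,
      Tendsto w (nhdsWithin x (Set.Iio x)) (nhds (w x)))
    (N : ℕ) (hN : 0 < N)
    (wN : ℝ → ℝ)
    (hwN : ∀ x : ℝ, wN x =
      (N : ℝ) * ∫ y in Set.Ico ((⌊(N : ℝ) * x⌋ : ℝ) / N)
        (((⌊(N : ℝ) * x⌋ : ℝ) + 1) / N), w y) :
    (∫ x in Set.Ioo (0:ℝ) 1, (w x - wN x) ^ 2) ≤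
      (1 / N) * ((eVariationOn w (Set.Ioo 0 1)).toReal) ^ 2 :=
  bv_piecewise_average_L2_error_general w hBV N hN wN hwN
end
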